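/- arXiv:1611.03699 — 3 statements merged into one kernel-verified Lean document; each statement's English description precedes it below -/
import Mathlib

section
/- Let N ≤ P and M ≤ N be positive integers, let C > 0 and t > 0 be real constants, and let A ∈ ℂ^{N×P} satisfy A·Aᴴ = C·I_N. Then a matrix Φ ∈ ℂ^{M×N} minimizes J(Φ) = ‖Aᴴ·Φᴴ·Φ·A − t·I_P‖_F² over all matrices in ℂ^{M×N} if and only if Φ·Φᴴ = (t/C)·I_M, i.e., if and only if the rows of Φ are mutually orthogonal and all have squared Euclidean norm t/C. -/
/-!
Since `A Aᴴ = C·I`, the traces of `X = Aᴴ Φᴴ Φ A` and of `X²` are `C` and `C²` times those of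
`Q = Φ Φᴴ` and `Q²`; expanding `‖X - t·I‖_F²` and `‖C·Q - t·I‖_F²` as traces therefore gives
`J(Φ) = ‖C·Φ Φᴴ - t·I_M‖_F² + t²(P - M)`. The constant is attained, because `M ≤ N` leaves room
for `M` orthogonal rows of squared norm `t/C`, so the minimizers are exactly the `Φ` with
`C·Φ Φᴴ = t·I_M`.
-/

open Matrix

noncomputable def frobSq {m n : Type*} [Fintype m] [Fintype n] (X : Matrix m n ℂ) : ℝ :=
  ∑ i, ∑ j, ‖X i j‖ ^ 2

section FrobSq

variable {m n : Type*} [Fintype m] [Fintype n]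

lemma frobSq_eq_re_trace (X : Matrix m n ℂ) : frobSq X = (trace (Xᴴ * X)).re := by
  simp only [frobSq, trace, diag, mul_apply, conjTranspose_apply, Complex.re_sum,
    Complex.star_def, ← Complex.normSq_eq_conj_mul_self, Complex.ofReal_re,
    Complex.normSq_eq_norm_sq]
  exact Finset.sum_comm

lemma frobSq_nonneg (X : Matrix m n ℂ) : 0 ≤ frobSq X := by
  unfold frobSq
  positivity

lemma frobSq_eq_zero_iff {X : Matrix m n ℂ} : frobSq X = 0 ↔ X = 0 := by
  rw [frobSq, Finset.sum_eq_zero_iff_of_nonneg fun i _ => by positivity, ← Matrix.ext_iff]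
  simp [Finset.sum_eq_zero_iff_of_nonneg]

lemma frobSq_hermitian_sub_smul_one [DecidableEq n] {X : Matrix n n ℂ} (hX : X.IsHermitian)
    (t : ℝ) :
    frobSq (X - (t : ℂ) • 1) =
      (trace (X * X)).re - 2 * t * (trace X).re + t ^ 2 * Fintype.card n := by
  rw [frobSq_eq_re_trace, conjTranspose_sub, hX.eq, conjTranspose_smul, conjTranspose_one,
    Complex.star_def, Complex.conj_ofReal]
  simp only [sub_mul, mul_sub, smul_mul, Matrix.mul_smul, mul_one, one_mul, trace_sub,
    trace_smul, trace_one, smul_eq_mul, Complex.sub_re, Complex.re_ofReal_mul, Complex.natCast_re]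
  ring

end FrobSq

section TightFrame

variable {m n p : Type*} [Fintype m] [Fintype n] [Fintype p] [DecidableEq n]
variable {c : ℝ} {A : Matrix n p ℂ} (hA : A * Aᴴ = (c : ℂ) • 1)
include hA

lemma trace_conjTranspose_mul_mul_of_mul_conjTranspose_eq_smul_one (Y : Matrix n n ℂ) :
    trace (Aᴴ * Y * A) = c * trace Y := by
  rw [trace_mul_cycle, hA, smul_mul, one_mul, trace_smul, smul_eq_mul]

lemma frobSq_sandwich_sub_smul_one [DecidableEq m] [DecidableEq p] (Ψ : Matrix m n ℂ) (t : ℝ) :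
    frobSq (Aᴴ * Ψᴴ * Ψ * A - (t : ℂ) • 1) =
      frobSq ((c : ℂ) • (Ψ * Ψᴴ) - (t : ℂ) • 1) + t ^ 2 * (Fintype.card p - Fintype.card m) := by
  have hX : (Aᴴ * Ψᴴ * Ψ * A).IsHermitian := by
    simpa [Matrix.mul_assoc] using isHermitian_conjTranspose_mul_self (Ψ * A)
  have hQ : ((c : ℂ) • (Ψ * Ψᴴ)).IsHermitian :=
    (isHermitian_mul_conjTranspose_self Ψ).smul (by simp [IsSelfAdjoint])
  have hX1 : trace (Aᴴ * Ψᴴ * Ψ * A) = c * trace (Ψ * Ψᴴ) := by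
    rw [Matrix.mul_assoc Aᴴ, trace_conjTranspose_mul_mul_of_mul_conjTranspose_eq_smul_one hA,
      trace_mul_comm]
  have hX2 : trace (Aᴴ * Ψᴴ * Ψ * A * (Aᴴ * Ψᴴ * Ψ * A)) =
      c ^ 2 * trace (Ψ * Ψᴴ * (Ψ * Ψᴴ)) := by
    calc _ = trace (Aᴴ * (Ψᴴ * Ψ * (A * Aᴴ) * Ψᴴ * Ψ) * A) := by simp only [Matrix.mul_assoc]
      _ = c ^ 2 * trace (Ψᴴ * (Ψ * Ψᴴ * Ψ)) := by
        rw [trace_conjTranspose_mul_mul_of_mul_conjTranspose_eq_smul_one hA, hA]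
        simp only [Matrix.mul_smul, Matrix.smul_mul, mul_one, trace_smul, smul_eq_mul,
          Matrix.mul_assoc]
        ring
      _ = c ^ 2 * trace (Ψ * Ψᴴ * (Ψ * Ψᴴ)) := by
        rw [trace_mul_comm]; simp only [Matrix.mul_assoc]
  rw [frobSq_hermitian_sub_smul_one hX, frobSq_hermitian_sub_smul_one hQ, hX1, hX2,
    ← Complex.ofReal_pow]
  simp only [Matrix.smul_mul, Matrix.mul_smul, smul_smul, trace_smul, smul_eq_mul,
    ← Complex.ofReal_mul, Complex.re_ofReal_mul]
  ring

end TightFrame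

lemma exists_mul_conjTranspose_eq_smul_one {m n : Type*} [Fintype n] [DecidableEq m]
    [DecidableEq n] (e : m ↪ n) {s : ℝ} (hs : 0 ≤ s) :
    ∃ Ψ : Matrix m n ℂ, Ψ * Ψᴴ = (s : ℂ) • 1 := by
  refine ⟨(Real.sqrt s : ℂ) • (1 : Matrix n n ℂ).submatrix e id, ?_⟩
  rw [conjTranspose_smul, conjTranspose_submatrix, conjTranspose_one, Matrix.smul_mul,
    Matrix.mul_smul, smul_smul, ← submatrix_mul _ _ _ _ _ Function.bijective_id, mul_one,
    submatrix_one _ e.injective, Complex.star_def, Complex.conj_ofReal, ← Complex.ofReal_mul,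
    Real.mul_self_sqrt hs]

theorem stmt1_general (N P M : ℕ) (hMN : M ≤ N)
    (C t : ℝ) (hC : 0 < C) (ht : 0 < t)
    (A : Matrix (Fin N) (Fin P) ℂ) (hA : A * Aᴴ = (C : ℂ) • 1)
    (Φ : Matrix (Fin M) (Fin N) ℂ) :
    (∀ Ψ : Matrix (Fin M) (Fin N) ℂ,
        frobSq (Aᴴ * Φᴴ * Φ * A - (t : ℂ) • 1) ≤ frobSq (Aᴴ * Ψᴴ * Ψ * A - (t : ℂ) • 1)) ↔
    Φ * Φᴴ = ((t / C : ℝ) : ℂ) • 1 := by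
  have tight : ∀ Ψ : Matrix (Fin M) (Fin N) ℂ,
      (C : ℂ) • (Ψ * Ψᴴ) - (t : ℂ) • 1 = 0 ↔ Ψ * Ψᴴ = ((t / C : ℝ) : ℂ) • 1 := by
    intro Ψ
    have hC' : (C : ℂ) ≠ 0 := by exact_mod_cast hC.ne'
    rw [sub_eq_zero, ← eq_inv_smul_iff₀ hC', smul_smul, inv_mul_eq_div, Complex.ofReal_div]
  obtain ⟨Ψ₀, hΨ₀⟩ := exists_mul_conjTranspose_eq_smul_one (Fin.castLEEmb hMN)
    (div_pos ht hC).le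
  simp only [frobSq_sandwich_sub_smul_one hA, add_le_add_iff_right]
  constructor
  · intro hΦ
    rw [← tight, ← frobSq_eq_zero_iff]
    refine le_antisymm ?_ (frobSq_nonneg _)
    simpa only [(tight Ψ₀).2 hΨ₀, frobSq_eq_zero_iff.2 rfl] using hΦ Ψ₀
  · intro hΦ Ψ
    rw [(tight Φ).2 hΦ, frobSq_eq_zero_iff.2 rfl]
    exact frobSq_nonneg _

/-- Corollary 1 of the paper: for the ideal target `T = t·I_P`, `Φ` minimizes
`‖Aᴴ Φᴴ Φ A − t·I‖_F²` iff `Φ·Φᴴ = (t/C)·I_M`, i.e. iff the rows of `Φ` are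
mutually orthogonal and all have squared norm `t/C`. -/
theorem stmt1 (N P M : ℕ) (hN : 0 < N) (hM : 0 < M) (hNP : N ≤ P) (hMN : M ≤ N)
    (C t : ℝ) (hC : 0 < C) (ht : 0 < t)
    (A : Matrix (Fin N) (Fin P) ℂ) (hA : A * Aᴴ = (C : ℂ) • 1)
    (Φ : Matrix (Fin M) (Fin N) ℂ) :
    (∀ Ψ : Matrix (Fin M) (Fin N) ℂ,
        frobSq (Aᴴ * Φᴴ * Φ * A - (t : ℂ) • 1) ≤ frobSq (Aᴴ * Ψᴴ * Ψ * A - (t : ℂ) • 1)) ↔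
    Φ * Φᴴ = ((t / C : ℝ) : ℂ) • 1 :=
  stmt1_general N P M hMN C t hC ht A hA Φ
end

section
/- Let N ≤ P be positive integers, let C > 0 be a real constant, and let A ∈ ℂ^{N×P} satisfy A·Aᴴ = C·I_N. Then for every X ∈ ℂ^{N×N} and every T ∈ ℂ^{P×P}, with S = A·T·Aᴴ, the identity ‖Aᴴ·X·A − T‖_F² = C²·‖X − C^{-2}·S‖_F² + ‖T‖_F² − C^{-2}·‖S‖_F² holds. -/
open Matrix

/-!
With `⟨X, Y⟩ = Re tr(Xᴴ Y)`, expand both sides as `‖U - V‖² = ‖U‖² - 2⟨U, V⟩ + ‖V‖²`.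
Since `A Aᴴ = C I`, the map `X ↦ Aᴴ X A` scales norms by `C`, and by cyclicity of the trace
`⟨Aᴴ X A, T⟩ = ⟨X, A T Aᴴ⟩ = ⟨X, S⟩`; the cross terms on both sides then agree.
-/

namespace Matrix

variable {m n : Type*} [Fintype m] [Fintype n]

lemma frobSq_eq_re_trace (X : Matrix m n ℂ) : frobSq X = (trace (Xᴴ * X)).re := by
  simp only [frobSq, trace, diag, mul_apply, conjTranspose_apply, Complex.re_sum]
  rw [Finset.sum_comm]
  refine Finset.sum_congr rfl fun i _ => Finset.sum_congr rfl fun j _ => ?_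
  rw [Complex.star_def, ← Complex.normSq_eq_conj_mul_self, Complex.ofReal_re,
    Complex.normSq_eq_norm_sq]

lemma frobSq_sub (X Y : Matrix m n ℂ) :
    frobSq (X - Y) = frobSq X - 2 * (trace (Xᴴ * Y)).re + frobSq Y := by
  have hswap : trace (Yᴴ * X) = star (trace (Xᴴ * Y)) := by
    rw [← trace_conjTranspose, conjTranspose_mul, conjTranspose_conjTranspose]
  simp only [frobSq_eq_re_trace, conjTranspose_sub, Matrix.sub_mul, Matrix.mul_sub, trace_sub,
    hswap, Complex.sub_re, Complex.star_def, Complex.conj_re]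
  ring

lemma frobSq_sub_ofReal_smul (X Y : Matrix m n ℂ) (r : ℝ) :
    frobSq (X - (r : ℂ) • Y) = frobSq X - 2 * r * (trace (Xᴴ * Y)).re + r ^ 2 * frobSq Y := by
  have hnorm : frobSq ((r : ℂ) • Y) = r ^ 2 * frobSq Y := by
    simp only [frobSq, smul_apply, smul_eq_mul, norm_mul, mul_pow, Complex.norm_real,
      Real.norm_eq_abs, sq_abs, Finset.mul_sum]
  rw [frobSq_sub, hnorm, Matrix.mul_smul, trace_smul, smul_eq_mul, Complex.re_ofReal_mul]
  ring

lemma frobSq_conjTranspose_mul_mul [DecidableEq m] {C : ℝ} {A : Matrix m n ℂ}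
    (hA : A * Aᴴ = (C : ℂ) • 1) (X : Matrix m m ℂ) :
    frobSq (Aᴴ * X * A) = C ^ 2 * frobSq X := by
  have htrace : trace ((Aᴴ * X * A)ᴴ * (Aᴴ * X * A)) = (C : ℂ) ^ 2 * trace (Xᴴ * X) := by
    calc trace ((Aᴴ * X * A)ᴴ * (Aᴴ * X * A))
        = trace (Aᴴ * Xᴴ * (A * Aᴴ) * X * A) := by
          simp only [conjTranspose_mul, conjTranspose_conjTranspose, Matrix.mul_assoc]
      _ = trace ((A * Aᴴ) * Xᴴ * (A * Aᴴ) * X) := by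
          rw [trace_mul_comm]; simp only [Matrix.mul_assoc]
      _ = (C : ℂ) ^ 2 * trace (Xᴴ * X) := by
          simp only [hA, Matrix.smul_mul, Matrix.mul_smul, Matrix.one_mul, Matrix.mul_one,
            smul_smul, trace_smul, smul_eq_mul, sq]
  rw [frobSq_eq_re_trace, frobSq_eq_re_trace, htrace, ← Complex.ofReal_pow,
    Complex.re_ofReal_mul]

lemma trace_conjTranspose_mul_mul_mul {R : Type*} [CommSemiring R] [StarRing R]
    (A : Matrix m n R) (X : Matrix m m R) (T : Matrix n n R) :
    trace ((Aᴴ * X * A)ᴴ * T) = trace (Xᴴ * (A * T * Aᴴ)) := by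
  simp only [conjTranspose_mul, conjTranspose_conjTranspose, Matrix.mul_assoc]
  rw [trace_mul_comm]
  simp only [Matrix.mul_assoc]

end Matrix

theorem stmt2_general (N P : ℕ)
    (C : ℝ) (hC : 0 < C)
    (A : Matrix (Fin N) (Fin P) ℂ) (hA : A * Aᴴ = (C : ℂ) • 1)
    (X : Matrix (Fin N) (Fin N) ℂ) (T : Matrix (Fin P) (Fin P) ℂ)
    (S : Matrix (Fin N) (Fin N) ℂ) (hS : S = A * T * Aᴴ) :
    frobSq (Aᴴ * X * A - T) =
      C ^ 2 * frobSq (X - ((C : ℂ) ^ 2)⁻¹ • S) + frobSq T - (C ^ 2)⁻¹ * frobSq S := by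
  have hC2 : C ^ 2 ≠ 0 := pow_ne_zero 2 hC.ne'
  have hscalar : ((C : ℂ) ^ 2)⁻¹ = (((C ^ 2)⁻¹ : ℝ) : ℂ) := by push_cast; rfl
  rw [hscalar, frobSq_sub_ofReal_smul, frobSq_sub, frobSq_conjTranspose_mul_mul hA,
    trace_conjTranspose_mul_mul_mul, ← hS]
  field_simp
  ring

/-- Key identity in the proof of Theorem 1 (Appendix A):
`‖Aᴴ X A − T‖_F² = C²·‖X − C⁻²·S‖_F² + ‖T‖_F² − C⁻²·‖S‖_F²` where `S = A T Aᴴ`. -/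
theorem stmt2 (N P : ℕ) (hN : 0 < N) (hNP : N ≤ P)
    (C : ℝ) (hC : 0 < C)
    (A : Matrix (Fin N) (Fin P) ℂ) (hA : A * Aᴴ = (C : ℂ) • 1)
    (X : Matrix (Fin N) (Fin N) ℂ) (T : Matrix (Fin P) (Fin P) ℂ)
    (S : Matrix (Fin N) (Fin N) ℂ) (hS : S = A * T * Aᴴ) :
    frobSq (Aᴴ * X * A - T) =
      C ^ 2 * frobSq (X - ((C : ℂ) ^ 2)⁻¹ • S) + frobSq T - (C ^ 2)⁻¹ * frobSq S :=
  stmt2_general N P C hC A hA X T S hS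
end

section
/- Let N, M be positive integers, η > 0 and P_s > 0 real constants, and for σ₁ ≥ 0, σ₂ ≥ 0 with (σ₁,σ₂) ≠ (0,0) define ρ_c(σ₁,σ₂) = η²·N·P_s / (η²·N·σ₁² + M·σ₂²) and ρ_s(σ₁,σ₂) = P_s / (σ₁² + σ₂²). Then: (i) ρ_c/ρ_s = η²·N·(σ₁² + σ₂²) / (η²·N·σ₁² + M·σ₂²); (ii) for fixed σ₁ > 0, the ratio ρ_c/ρ_s tends to 1 as σ₂ → 0⁺; and (iii) for fixed σ₂ > 0, the ratio ρ_c/ρ_s tends to η²·N/M as σ₁ → 0⁺. -/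
open Filter Topology

/-! The common signal power cancels in `ρ_c / ρ_s`, leaving a ratio of two quadratic forms in
`(σ₁, σ₂)`. That ratio is continuous wherever its denominator is nonzero, so each limit is its
value on the corresponding axis. -/

-- No condition on `D₁, D₂` is needed: with `x / 0 = 0` both sides vanish when either is `0`.
lemma mul_div_div_div_cancel_left {c P D₁ D₂ : ℝ} (hP : P ≠ 0) :
    c * P / D₁ / (P / D₂) = c * D₂ / D₁ := by
  field_simp

lemma tendsto_noise_ratio_snd_zero {a x : ℝ} (b : ℝ) (ha : a ≠ 0) (hx : x ≠ 0) :
    Tendsto (fun y : ℝ => a * (x ^ 2 + y ^ 2) / (a * x ^ 2 + b * y ^ 2)) (𝓝 0) (𝓝 1) := by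
  have hcont : ContinuousAt (fun y : ℝ => a * (x ^ 2 + y ^ 2) / (a * x ^ 2 + b * y ^ 2)) 0 := by
    fun_prop (disch := simp [ha, hx])
  simpa [div_self (mul_ne_zero ha (pow_ne_zero 2 hx))] using hcont.tendsto

lemma tendsto_noise_ratio_fst_zero {b y : ℝ} (a : ℝ) (hb : b ≠ 0) (hy : y ≠ 0) :
    Tendsto (fun x : ℝ => a * (x ^ 2 + y ^ 2) / (a * x ^ 2 + b * y ^ 2)) (𝓝 0) (𝓝 (a / b)) := by
  have hcont : ContinuousAt (fun x : ℝ => a * (x ^ 2 + y ^ 2) / (a * x ^ 2 + b * y ^ 2)) 0 := by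
    fun_prop (disch := simp [hb, hy])
  simpa [mul_div_mul_right a b (pow_ne_zero 2 hy)] using hcont.tendsto

/-- SNR comparison of compressive and sparse arrays (Section 'Estimation
accuracy'): the ratio `ρ_c/ρ_s`, its limit 1 as the measurement noise `σ₂`
vanishes, and its limit `η²·N/M` as the signal noise `σ₁` vanishes. -/
theorem stmt10 (N M : ℕ) (hN : 0 < N) (hM : 0 < M)
    (η Ps : ℝ) (hη : 0 < η) (hPs : 0 < Ps)
    (ρc ρs : ℝ → ℝ → ℝ)
    (hρc : ∀ σ₁ σ₂ : ℝ, ρc σ₁ σ₂ = η ^ 2 * N * Ps / (η ^ 2 * N * σ₁ ^ 2 + M * σ₂ ^ 2))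
    (hρs : ∀ σ₁ σ₂ : ℝ, ρs σ₁ σ₂ = Ps / (σ₁ ^ 2 + σ₂ ^ 2)) :
    (∀ σ₁ σ₂ : ℝ, 0 ≤ σ₁ → 0 ≤ σ₂ → (σ₁, σ₂) ≠ (0, 0) →
        ρc σ₁ σ₂ / ρs σ₁ σ₂ =
          η ^ 2 * N * (σ₁ ^ 2 + σ₂ ^ 2) / (η ^ 2 * N * σ₁ ^ 2 + M * σ₂ ^ 2)) ∧
    (∀ σ₁ : ℝ, 0 < σ₁ →
        Tendsto (fun σ₂ : ℝ => ρc σ₁ σ₂ / ρs σ₁ σ₂) (nhdsWithin 0 (Set.Ioi 0)) (nhds 1)) ∧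
    (∀ σ₂ : ℝ, 0 < σ₂ →
        Tendsto (fun σ₁ : ℝ => ρc σ₁ σ₂ / ρs σ₁ σ₂) (nhdsWithin 0 (Set.Ioi 0))
          (nhds (η ^ 2 * N / M))) := by
  have hratio : ∀ σ₁ σ₂ : ℝ, ρc σ₁ σ₂ / ρs σ₁ σ₂ =
      η ^ 2 * N * (σ₁ ^ 2 + σ₂ ^ 2) / (η ^ 2 * N * σ₁ ^ 2 + M * σ₂ ^ 2) := fun σ₁ σ₂ => by
    rw [hρc, hρs, mul_div_div_div_cancel_left hPs.ne']
  have hgain : (η ^ 2 * N : ℝ) ≠ 0 := by positivity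
  refine ⟨fun σ₁ σ₂ _ _ _ => hratio σ₁ σ₂, fun σ₁ hσ₁ => ?_, fun σ₂ hσ₂ => ?_⟩ <;>
    simp_rw [hratio] <;> refine Tendsto.mono_left ?_ nhdsWithin_le_nhds
  · exact tendsto_noise_ratio_snd_zero _ hgain hσ₁.ne'
  · exact tendsto_noise_ratio_fst_zero _ (by positivity) hσ₂.ne'
end
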